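/- arXiv:1109.5164 — 6 statements merged into one kernel-verified Lean document; each statement's English description precedes it below -/
import Mathlib

section
/- Let l ≥ 1 and let r_1, …, r_l be positive integers with r_1 + ⋯ + r_l = r, and let d be an integer with gcd(r,d) = 1. For a real number λ set M(r_1,…,r_l; λ) = Σ_{i=1}^{l−1} (r_i + r_{i+1})·⟨(r_1+⋯+r_i)·λ⟩. Then for every real x with 0 < x and x ≠ 1, writing y = x^{−1}, one has y^{M(r_1,…,r_l; d/r)} / ∏_{i=1}^{l−1}(1 − y^{r_i+r_{i+1}}) = (−1)^{l−1} · x^{M(r_l,…,r_1; d/r)} / ∏_{i=1}^{l−1}(1 − x^{r_i+r_{i+1}}). -/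
/-!
Write `s_i = r_1 + ⋯ + r_i` and `λ = d/r`. The partial sums of the reversed list are `r - s_i`,
and for `0 < s_i < r` coprimality of `r` and `d` keeps `s_i λ` off the integers, so
`⟨(r - s_i)λ⟩ = 1 - ⟨s_i λ⟩`. Hence `M(r_1,…,r_l) + M(r_l,…,r_1) = N := Σ (r_i + r_{i+1})`.
On the other side `1 - y^a = -y^a (1 - x^a)`, so the two denominators differ by the factor
`(-1)^{l-1} x^{-N}`, and `x^{N - M(r_1,…,r_l)} = x^{M(r_l,…,r_1)}`.
-/

open Finset

noncomputable section

/-- `ang x` is `⟨x⟩ = ⌊x⌋ + 1 - x`, the unique element of `(0,1]` with `x + ⟨x⟩ ∈ ℤ`. -/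
def ang (x : ℝ) : ℝ := (⌊x⌋ : ℝ) + 1 - x

/-- `M(r₁,…,r_l; λ) = Σ_{i=1}^{l-1} (r_i + r_{i+1}) · ⟨(r₁+⋯+r_i)·λ⟩` for `L = [r₁,…,r_l]`. -/
def Mfun (L : List ℕ) (lam : ℝ) : ℝ :=
  ∑ i ∈ Finset.range (L.length - 1),
    ((L.getD i 0 : ℝ) + (L.getD (i+1) 0 : ℝ)) * ang (((L.take (i+1)).sum : ℝ) * lam)

/-- `∏_{i=1}^{l-1} (1 - x^{m·(r_i + r_{i+1})})`. -/
def adjProd (x : ℝ) (m : ℕ) (L : List ℕ) : ℝ :=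
  ∏ i ∈ Finset.range (L.length - 1), (1 - x ^ (m * (L.getD i 0 + L.getD (i+1) 0)))

/-- `Σ_{1 ≤ i < j ≤ l} r_i r_j`. -/
def pairSum (L : List ℕ) : ℝ :=
  ∑ i ∈ Finset.range L.length, ∑ j ∈ Finset.Ico (i+1) L.length,
    (L.getD i 0 : ℝ) * (L.getD j 0 : ℝ)

lemma ang_eq_one_sub_fract (y : ℝ) : ang y = 1 - Int.fract y := by
  rw [ang, Int.fract]; ring

lemma ang_intCast_sub {y : ℝ} (n : ℤ) (hy : Int.fract y ≠ 0) : ang (n - y) = 1 - ang y := by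
  rw [ang_eq_one_sub_fract, ang_eq_one_sub_fract, sub_eq_add_neg (n : ℝ), Int.fract_intCast_add,
    Int.fract_neg hy]

lemma fract_mul_div_ne_zero {r s : ℕ} {d : ℤ} (hcop : Int.gcd r d = 1) (hs : 0 < s)
    (hsr : s < r) : Int.fract ((s : ℝ) * (d / r)) ≠ 0 := by
  intro h
  obtain ⟨z, hz⟩ := Int.fract_eq_zero_iff.mp h
  have hr : (r : ℝ) ≠ 0 := Nat.cast_ne_zero.mpr (by omega)
  have hsd : (s * d : ℤ) = z * r := by
    rw [mul_div_assoc', eq_div_iff hr] at hz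
    exact_mod_cast hz.symm
  have hrs : (r : ℤ) ∣ s :=
    (Int.isCoprime_iff_gcd_eq_one.mpr hcop).dvd_of_dvd_mul_right ⟨z, by rw [hsd, mul_comm]⟩
  exact absurd (Nat.le_of_dvd hs (Int.natCast_dvd_natCast.mp hrs)) (not_le.mpr hsr)

lemma ang_sub_mul_div {r s : ℕ} {d : ℤ} (hcop : Int.gcd r d = 1) (hs : 0 < s) (hsr : s < r) :
    ang (((r : ℝ) - s) * (d / r)) = 1 - ang ((s : ℝ) * (d / r)) := by
  have hr : (r : ℝ) ≠ 0 := Nat.cast_ne_zero.mpr (by omega)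
  have hshift : ((r : ℝ) - s) * (d / r) = d - s * (d / r) := by field_simp
  rw [hshift, ang_intCast_sub d (fract_mul_div_ne_zero hcop hs hsr)]

lemma List.sum_take_pos {L : List ℕ} (hpos : ∀ a ∈ L, 0 < a) {k : ℕ} (hk : 0 < k)
    (hkL : k < L.length) : 0 < (L.take k).sum :=
  List.sum_pos _ (fun a ha => hpos a (List.take_subset k L ha))
    (List.ne_nil_of_length_pos (by simp; omega))

lemma List.sum_take_lt_sum {L : List ℕ} (hpos : ∀ a ∈ L, 0 < a) {k : ℕ} (hkL : k < L.length) :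
    (L.take k).sum < L.sum := by
  have hdrop : 0 < (L.drop k).sum :=
    List.sum_pos _ (fun a ha => hpos a (List.drop_subset k L ha)) (by simp; omega)
  rw [← List.sum_take_add_sum_drop L k]
  omega

lemma Mfun_reverse (L : List ℕ) (lam : ℝ) :
    Mfun L.reverse lam = ∑ i ∈ range (L.length - 1),
      ((L.getD i 0 : ℝ) + L.getD (i + 1) 0) *
        ang (((L.sum : ℝ) - (L.take (i + 1)).sum) * lam) := by
  rw [Mfun, List.length_reverse, ← sum_range_reflect]
  refine sum_congr rfl fun i hi => ?_
  have hi : i + 1 < L.length := by rw [mem_range] at hi; omega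
  have hfst : L.reverse.getD (L.length - 1 - 1 - i) 0 = L.getD (i + 1) 0 := by
    rw [List.getD_reverse _ (by omega)]; congr 1; omega
  have hsnd : L.reverse.getD (L.length - 1 - 1 - i + 1) 0 = L.getD i 0 := by
    rw [List.getD_reverse _ (by omega)]; congr 1; omega
  have htake : ((L.reverse.take (L.length - 1 - 1 - i + 1)).sum : ℝ) =
      L.sum - (L.take (i + 1)).sum := by
    rw [List.take_reverse, List.sum_reverse, eq_sub_iff_add_eq, ← Nat.cast_add, add_comm,
      show L.length - (L.length - 1 - 1 - i + 1) = i + 1 by omega, List.sum_take_add_sum_drop]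
  rw [hfst, hsnd, htake, add_comm]

def adjSum (L : List ℕ) : ℕ :=
  ∑ i ∈ range (L.length - 1), (L.getD i 0 + L.getD (i + 1) 0)

lemma Mfun_add_Mfun_reverse {L : List ℕ} (hpos : ∀ a ∈ L, 0 < a) {d : ℤ}
    (hcop : Int.gcd (L.sum : ℤ) d = 1) :
    Mfun L (d / L.sum) + Mfun L.reverse (d / L.sum) = adjSum L := by
  rw [Mfun, Mfun_reverse, ← sum_add_distrib, adjSum, Nat.cast_sum]
  refine sum_congr rfl fun i hi => ?_
  have hi : i + 1 < L.length := by rw [mem_range] at hi; omega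
  rw [ang_sub_mul_div hcop (List.sum_take_pos hpos i.succ_pos hi)
    (List.sum_take_lt_sum hpos hi)]
  push_cast
  ring

lemma one_sub_inv_pow {x : ℝ} (hx : x ≠ 0) (n : ℕ) :
    1 - x⁻¹ ^ n = -(x ^ n)⁻¹ * (1 - x ^ n) := by
  rw [inv_pow]
  field_simp
  ring

lemma adjProd_inv {x : ℝ} (hx : x ≠ 0) (m : ℕ) (L : List ℕ) :
    adjProd x⁻¹ m L = (-1) ^ (L.length - 1) * (x ^ (m * adjSum L))⁻¹ * adjProd x m L := by
  simp only [adjProd, one_sub_inv_pow hx, prod_mul_distrib, neg_mul, prod_neg, ← inv_pow,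
    prod_pow_eq_pow_sum, card_range, adjSum, mul_sum]
  ring

theorem stmt0_general (L : List ℕ) (hpos : ∀ a ∈ L, 0 < a)
    (r : ℕ) (hsum : L.sum = r)
    (d : ℤ) (hcop : Int.gcd (r : ℤ) d = 1)
    (x : ℝ) (hx : 0 < x) :
    x⁻¹ ^ (Mfun L ((d : ℝ) / (r : ℝ))) / adjProd x⁻¹ 1 L =
      (-1 : ℝ) ^ (L.length - 1) *
        (x ^ (Mfun L.reverse ((d : ℝ) / (r : ℝ))) / adjProd x 1 L) := by
  subst hsum
  set A := Mfun L (d / L.sum)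
  set B := Mfun L.reverse (d / L.sum)
  have hAB : x ^ A * x ^ B = x ^ (1 * adjSum L) := by
    rw [← Real.rpow_add hx, Mfun_add_Mfun_reverse hpos hcop, one_mul, Real.rpow_natCast]
  have hA : x ^ A ≠ 0 := (Real.rpow_pos_of_pos hx A).ne'
  rw [Real.inv_rpow hx.le, adjProd_inv hx.ne', ← hAB]
  field_simp
  rw [← pow_mul, mul_comm, pow_mul, neg_one_sq, one_pow]

/-- Lemma 5.8 (Lemma `lm:inverse`) of Liu–Schaffhauser,
"The Yang-Mills Equations over Klein Surfaces". -/
theorem stmt0 (L : List ℕ) (hL : L ≠ []) (hpos : ∀ a ∈ L, 0 < a)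
    (r : ℕ) (hrpos : 0 < r) (hsum : L.sum = r)
    (d : ℤ) (hcop : Int.gcd (r : ℤ) d = 1)
    (x : ℝ) (hx : 0 < x) (hx1 : x ≠ 1) :
    x⁻¹ ^ (Mfun L ((d : ℝ) / (r : ℝ))) / adjProd x⁻¹ 1 L =
      (-1 : ℝ) ^ (L.length - 1) *
        (x ^ (Mfun L.reverse ((d : ℝ) / (r : ℝ))) / adjProd x 1 L) :=
  stmt0_general L hpos r hsum d hcop x hx

end
end

section
/- Let g ≥ 2 and 0 ≤ n ≤ g+1 be integers and let r be a positive integer. Define, for real t > 0 with t ≠ 1, Q̄(t) = t^{−r²(g−1)/2} · Q^{ℝ}_{g,n}(r)(t) (a real power of t times Q^{ℝ}_{g,n}(r)(t)). Then Q̄(1/t) = −Q̄(t) for all real t > 0 with t ≠ 1. -/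
/-! Under `t ↦ t⁻¹` every factor of `QR` transforms as `1 ± t⁻ᵏ = ±t⁻ᵏ (1 ± tᵏ)`. Since
`∑_{j<r} (2j+1) = r²` and `∑_{j<r-1} (j+1) + ∑_{j<r} (j+1) = r²`, the numerator picks up
`t^{-(g+1)r²}` and the denominator, a product of `2r-1` factors, picks up `-t^{-2r²}`. Hence
`QR(t⁻¹) = -t^{r²(1-g)} QR(t)`, and the normalizing power `t^{-r²(g-1)/2}` absorbs `t^{r²(1-g)}`. -/

open Finset

noncomputable section

/-- `Q^{ℝ}_{g,n}(r)(t)`, the mod 2 Poincaré series of the classifying space of the real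
gauge group of a rank `r` real bundle on a Klein surface of topological type `(g,n,a)`. -/
def QR (g n r : ℕ) (t : ℝ) : ℝ :=
  ((∏ j ∈ Finset.range r, (1 + t ^ (2*j+1)) ^ (g + 1 - n)) *
   (∏ j ∈ Finset.range (r - 1), (1 + t ^ (j+1)) ^ n) *
   (∏ j ∈ Finset.range r, (1 + t ^ (j+1)) ^ n)) /
  ((∏ j ∈ Finset.range (r - 1), (1 - t ^ (2*j+2))) * ∏ j ∈ Finset.range r, (1 - t ^ (2*j+2)))

section InvSubstitution

variable {K ι : Type*} [Field K] {t : K}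

theorem one_add_inv_pow (ht : t ≠ 0) (k : ℕ) : 1 + t⁻¹ ^ k = t⁻¹ ^ k * (1 + t ^ k) := by
  rw [mul_add, mul_one, ← mul_pow, inv_mul_cancel₀ ht, one_pow, add_comm]

theorem one_sub_inv_pow_s1 (ht : t ≠ 0) (k : ℕ) : 1 - t⁻¹ ^ k = -t⁻¹ ^ k * (1 - t ^ k) := by
  rw [neg_mul, mul_sub, mul_one, ← mul_pow, inv_mul_cancel₀ ht, one_pow, neg_sub]

theorem prod_one_add_inv_pow_pow (ht : t ≠ 0) (s : Finset ι) (k : ι → ℕ) (m : ℕ) :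
    ∏ j ∈ s, (1 + t⁻¹ ^ k j) ^ m = t⁻¹ ^ (m * ∑ j ∈ s, k j) * ∏ j ∈ s, (1 + t ^ k j) ^ m := by
  simp only [one_add_inv_pow ht, mul_pow, prod_mul_distrib, ← pow_mul, prod_pow_eq_pow_sum,
    ← sum_mul, mul_comm m]

theorem prod_one_sub_inv_pow (ht : t ≠ 0) (s : Finset ι) (k : ι → ℕ) :
    ∏ j ∈ s, (1 - t⁻¹ ^ k j) = (-1) ^ #s * t⁻¹ ^ (∑ j ∈ s, k j) * ∏ j ∈ s, (1 - t ^ k j) := by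
  simp only [one_sub_inv_pow_s1 ht, prod_mul_distrib, prod_neg, prod_pow_eq_pow_sum]

end InvSubstitution

theorem sum_range_two_mul_add_one (r : ℕ) : ∑ j ∈ range r, (2 * j + 1) = r ^ 2 := by
  induction r with
  | zero => rfl
  | succ m ih => rw [sum_range_succ, ih]; ring

theorem sum_range_pred_succ_add_sum_range_succ (r : ℕ) :
    ∑ j ∈ range (r - 1), (j + 1) + ∑ j ∈ range r, (j + 1) = r ^ 2 := by
  have hshift : ∑ j ∈ range (r - 1), (j + 1) = ∑ j ∈ range r, j := by
    cases r with
    | zero => rfl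
    | succ m => rw [sum_range_succ', add_zero, Nat.add_sub_cancel]
  rw [hshift, ← sum_add_distrib, ← sum_range_two_mul_add_one]
  exact sum_congr rfl fun j _ ↦ by ring

theorem QR_inv (g n r : ℕ) (hn : n ≤ g + 1) (hr : 0 < r) {t : ℝ} (ht : t ≠ 0) :
    QR g n r t⁻¹ = -(t ^ ((r : ℤ) ^ 2 * (1 - g)) * QR g n r t) := by
  have hnum : (g + 1 - n) * ∑ j ∈ range r, (2 * j + 1) + n * ∑ j ∈ range (r - 1), (j + 1)
      + n * ∑ j ∈ range r, (j + 1) = (g + 1) * r ^ 2 := by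
    rw [add_assoc, ← mul_add, sum_range_pred_succ_add_sum_range_succ,
      sum_range_two_mul_add_one, ← add_mul, Nat.sub_add_cancel hn]
  have hden : ∑ j ∈ range (r - 1), (2 * j + 2) + ∑ j ∈ range r, (2 * j + 2) = 2 * r ^ 2 := by
    simp only [← mul_add_one, ← mul_sum, ← mul_add, sum_range_pred_succ_add_sum_range_succ]
  have hsign : (-1 : ℝ) ^ (r - 1) * (-1) ^ r = -1 := by
    rw [← pow_add, Odd.neg_one_pow ⟨r - 1, by omega⟩]
  have hpow : t ^ ((r : ℤ) ^ 2 * (1 - g))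
      = -(t⁻¹ ^ ((g + 1) * r ^ 2) / ((-1) ^ (r - 1) * (-1) ^ r * t⁻¹ ^ (2 * r ^ 2))) := by
    rw [hsign, show (r : ℤ) ^ 2 * (1 - g) = ((2 * r ^ 2 : ℕ) : ℤ) - ((g + 1) * r ^ 2 : ℕ) by
      push_cast; ring, zpow_sub₀ ht, zpow_natCast, zpow_natCast, inv_pow, inv_pow]
    field_simp
  rw [QR, QR, prod_one_add_inv_pow_pow ht, prod_one_add_inv_pow_pow ht (k := fun j ↦ j + 1),
    prod_one_add_inv_pow_pow ht (k := fun j ↦ j + 1), prod_one_sub_inv_pow ht,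
    prod_one_sub_inv_pow ht, hpow, ← hnum, ← hden, card_range, card_range]
  simp only [pow_add]
  ring

theorem stmt1_general (g n r : ℕ) (hn : n ≤ g + 1) (hr : 0 < r)
    (t : ℝ) (ht : 0 < t) :
    (1/t) ^ (-(r : ℝ)^2 * ((g : ℝ) - 1) / 2) * QR g n r (1/t) =
      -((t : ℝ) ^ (-(r : ℝ)^2 * ((g : ℝ) - 1) / 2) * QR g n r t) := by
  rw [one_div, QR_inv g n r hn hr ht.ne', Real.inv_rpow ht.le, ← Real.rpow_neg ht.le,
    ← Real.rpow_intCast, mul_neg, ← mul_assoc, ← Real.rpow_add ht]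
  congr 3
  push_cast
  ring

/-- `Q̄(1/t) = -Q̄(t)` for the normalized real-gauge-group Poincaré series. -/
theorem stmt1 (g n r : ℕ) (hg : 2 ≤ g) (hn : n ≤ g + 1) (hr : 0 < r)
    (t : ℝ) (ht : 0 < t) (ht1 : t ≠ 1) :
    (1/t) ^ (-(r : ℝ)^2 * ((g : ℝ) - 1) / 2) * QR g n r (1/t) =
      -((t : ℝ) ^ (-(r : ℝ)^2 * ((g : ℝ) - 1) / 2) * QR g n r t) :=
  stmt1_general g n r hn hr t ht

end
end

section
/- For every integer g ≥ 2 and every real t ∈ (0,1): (1−t) · P²ℝ_{g,g+1}(t) / (1+t)^{g} = (1+t)^{g−1} · ((1+t²)^{g} − (2t)^{g}) / (1−t)². (This is the mod 2 Poincaré polynomial of the moduli space of semistable real holomorphic rank-2, degree-1 bundles with fixed determinant on a maximal real algebraic curve of genus g, as conjectured by Saveliev and Wang.) -/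
open Finset

noncomputable section

/-- `P²ℝ_{g,n}(t)`, the mod 2 equivariant Poincaré series of semistable real holomorphic
structures of rank 2 and degree 1 on a Klein surface of type `(g,n,a)`, `n > 0`. -/
def P2R (g n : ℕ) (t : ℝ) : ℝ :=
  (1+t)^(g+n+1) * (1+t^2)^n * (1+t^3)^(g+1-n) / ((1-t^2)^2 * (1-t^4)) -
    2^(n-1) * (1+t)^(2*g+2) * t^g / (1-t^2)^3

theorem P2R_self_succ (g : ℕ) (t : ℝ) :
    P2R g (g+1) t = (1+t)^(2*g+2) * ((1+t^2)^g - (2*t)^g) / (1-t^2)^3 := by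
  by_cases ht : 1 - t^2 = 0
  · simp [P2R, ht]
  have h4 : 1 - t^4 = (1 - t^2) * (1 + t^2) := by ring
  have hpos : 1 + t^2 ≠ 0 := by positivity
  rw [P2R, Nat.sub_self, Nat.add_sub_cancel, h4, show g + (g+1) + 1 = 2*g+2 by ring]
  field_simp
  ring

/-- The Saveliev–Wang formula for the mod 2 Poincaré polynomial of the moduli space of
semistable real rank 2, degree 1 bundles with fixed determinant on a maximal real curve. -/
theorem stmt13 (g : ℕ) (hg : 2 ≤ g) (t : ℝ) (ht : t ∈ Set.Ioo (0:ℝ) 1) :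
    (1 - t) * P2R g (g+1) t / (1+t)^g =
      (1+t)^(g-1) * ((1+t^2)^g - (2*t)^g) / (1-t)^2 := by
  obtain ⟨ht0, ht1⟩ := ht
  have hminus : 1 - t ≠ 0 := by linarith
  have hplus : 1 + t ≠ 0 := by linarith
  rw [P2R_self_succ, show 2*g+2 = (g-1) + g + 3 by omega, pow_add, pow_add,
    show 1 - t^2 = (1 - t) * (1 + t) by ring]
  field_simp

end
end

section
/- Let g ≥ 2 and 1 ≤ n ≤ g+1 be integers. (i) For all real t ∈ (0,1): (1−t) · P²ℝ_{g,n}(t) = (1+t)^{g+n−2}(1+t³)^{g−n+1} · Σ_{i=0}^{n−2}(1+t²)^{n−2−i}(2t)^{i} + (1+t)^{g+n−1}(2t)^{n−1} · Σ_{i=0}^{g−n}(1+t³)^{g−n−i}(t+t²)^{i}, where a sum whose upper index is smaller than its lower index is 0. (ii) Consequently (1−t) · P²ℝ_{g,n}(t) tends to (2g−n+1)·2^{2g+n−3} as t → 1⁻. -/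
/-!
Over the common denominator `(1 - t)³` the two terms of `P²ℝ_{g,n}` share the factor
`(1 + t)^(g+n-2)`, which leaves `(1-t)² · (1-t) P²ℝ_{g,n}(t) = (1+t)^(g+n-2) (A^p C^m - B^p D^m)`
with `A = 1 + t²`, `B = 2t`, `C = 1 + t³`, `D = t + t²`, `p = n - 1`, `m = g + 1 - n`.
Since `A - B = (1 - t)²` and `C - D = (1 - t)² (1 + t)`, writing
`A^p C^m - B^p D^m = (A^p - B^p) C^m + B^p (C^m - D^m)` and expanding both differences of powers
as geometric sums cancels the pole. The resulting expression is a polynomial in `t`, so its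
limit at `1` is its value there, where `A = B = C = D = 2`.
-/

open Finset

noncomputable section

section GeomSum

variable {R : Type*} [CommRing R]

theorem sub_mul_sum_pow_mul_pow (X x : R) (p : ℕ) :
    (X - x) * ∑ i ∈ range p, X ^ (p - 1 - i) * x ^ i = X ^ p - x ^ p := by
  rw [← (Commute.all X x).mul_geom_sum₂, geom_sum₂_comm]
  exact congrArg _ (sum_congr rfl fun i _ => mul_comm _ _)

theorem pow_mul_pow_sub_pow_mul_pow (X x Y y : R) (p m : ℕ) :
    X ^ p * Y ^ m - x ^ p * y ^ m =
      (X - x) * Y ^ m * ∑ i ∈ range p, X ^ (p - 1 - i) * x ^ i +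
        x ^ p * (Y - y) * ∑ i ∈ range m, Y ^ (m - 1 - i) * y ^ i := by
  linear_combination -Y ^ m * sub_mul_sum_pow_mul_pow X x p -
    x ^ p * sub_mul_sum_pow_mul_pow Y y m

theorem sum_pow_mul_pow_self (x : R) (p : ℕ) :
    ∑ i ∈ range p, x ^ (p - 1 - i) * x ^ i = p * x ^ (p - 1) := by
  rw [← geom_sum₂_self]
  exact sum_congr rfl fun i _ => mul_comm _ _

end GeomSum

theorem natCast_mul_pow_pred_mul {R : Type*} [Semiring R] (x : R) (p : ℕ) :
    (p : R) * x ^ (p - 1) * x = p * x ^ p := by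
  cases p with
  | zero => simp
  | succ q => rw [Nat.add_sub_cancel, mul_assoc, ← pow_succ]

def P2RExpansion (g n : ℕ) (t : ℝ) : ℝ :=
  (1+t)^(g+n-2) * (1+t^3)^(g+1-n) *
    (∑ i ∈ Finset.range (n-1), (1+t^2)^(n-2-i) * (2*t)^i) +
  (1+t)^(g+n-1) * (2*t)^(n-1) *
    (∑ i ∈ Finset.range (g+1-n), (1+t^3)^(g-n-i) * (t+t^2)^i)

theorem one_sub_pow_three_mul_P2R {g n : ℕ} (hg : 1 ≤ g) (hn1 : 1 ≤ n) (hn : n ≤ g + 1) {t : ℝ}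
    (ht : t ^ 2 ≠ 1) :
    (1 - t) ^ 3 * P2R g n t = (1 + t) ^ (g + n - 2) *
      ((1 + t ^ 2) ^ (n - 1) * (1 + t ^ 3) ^ (g + 1 - n) -
        (2 * t) ^ (n - 1) * (t + t ^ 2) ^ (g + 1 - n)) := by
  have h2 : 1 - t ^ 2 ≠ 0 := sub_ne_zero.mpr ht.symm
  have h4 : 1 - t ^ 4 ≠ 0 := by
    rw [show 1 - t ^ 4 = (1 - t ^ 2) * (1 + t ^ 2) by ring]
    exact mul_ne_zero h2 (by positivity)
  obtain ⟨p, rfl⟩ : ∃ p, n = p + 1 := ⟨n - 1, by omega⟩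
  obtain ⟨m, rfl⟩ : ∃ m, g = p + m := ⟨g - p, by omega⟩
  obtain ⟨k, hk⟩ : ∃ k, k + 1 = 2 * p + m := ⟨2 * p + m - 1, by omega⟩
  rw [P2R, show p + m + (p + 1) + 1 = k + 3 by omega, show p + m + (p + 1) - 2 = k by omega,
    show 2 * (p + m) + 2 = k + m + 3 by omega, show p + m + 1 - (p + 1) = m by omega,
    Nat.add_sub_cancel, show t + t ^ 2 = t * (1 + t) by ring, mul_pow t]
  field_simp
  ring

theorem P2RExpansion_one {g n : ℕ} (hg : 1 ≤ g) (hn1 : 1 ≤ n) (hn : n ≤ g + 1) :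
    P2RExpansion g n 1 = ((2 * g + 1 - n : ℕ) : ℝ) * 2 ^ (2 * g + n - 3) := by
  obtain ⟨p, rfl⟩ : ∃ p, n = p + 1 := ⟨n - 1, by omega⟩
  obtain ⟨m, rfl⟩ : ∃ m, g = p + m := ⟨g - p, by omega⟩
  obtain ⟨k, hk⟩ : ∃ k, k + 1 = 2 * p + m := ⟨2 * p + m - 1, by omega⟩
  rw [P2RExpansion, show p + m + (p + 1) - 2 = k by omega,
    show p + m + (p + 1) - 1 = k + 1 by omega, show p + m + 1 - (p + 1) = m by omega,
    show p + 1 - 2 = p - 1 by omega, show p + m - (p + 1) = m - 1 by omega, Nat.add_sub_cancel]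
  norm_num only [sum_pow_mul_pow_self]
  obtain ⟨c, hc⟩ : ∃ c, c + 2 = 3 * p + 2 * m := ⟨3 * p + 2 * m - 2, by omega⟩
  rw [show 2 * (p + m) + 1 - (p + 1) = p + 2 * m by omega,
    show 2 * (p + m) + (p + 1) - 3 = c by omega]
  have hexp : (2 : ℝ) ^ (k + 1) * 2 ^ p * 2 ^ m = 2 ^ (c + 2) := by
    rw [← pow_add, ← pow_add]
    congr 1
    omega
  push_cast
  linear_combination (2 ^ k * 2 ^ m / 2 : ℝ) * natCast_mul_pow_pred_mul (2 : ℝ) p +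
    (2 ^ (k + 1) * 2 ^ p / 2 : ℝ) * natCast_mul_pow_pred_mul (2 : ℝ) m +
    ((p + 2 * m) / 4 : ℝ) * hexp

theorem one_sub_mul_P2R {g n : ℕ} (hg : 1 ≤ g) (hn1 : 1 ≤ n) (hn : n ≤ g + 1) {t : ℝ}
    (ht : t ^ 2 ≠ 1) :
    (1 - t) * P2R g n t = P2RExpansion g n t := by
  have ht1 : (1 - t) ^ 2 ≠ 0 := pow_ne_zero 2 fun h => ht (by rw [← sub_eq_zero.mp h, one_pow])
  apply mul_left_cancel₀ ht1
  rw [← mul_assoc, ← pow_succ, one_sub_pow_three_mul_P2R hg hn1 hn ht,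
    pow_mul_pow_sub_pow_mul_pow, P2RExpansion, show n - 2 = n - 1 - 1 by omega,
    show g - n = g + 1 - n - 1 by omega, show g + n - 1 = g + n - 2 + 1 by omega]
  ring

theorem continuous_P2RExpansion (g n : ℕ) : Continuous (P2RExpansion g n) := by
  unfold P2RExpansion
  fun_prop

/-- The total mod 2 Betti number of a connected component of the real points of the moduli
space of rank 2, degree 1 stable bundles on a real curve of type `(g,n,a)`, `n > 0`. -/
theorem stmt15 (g n : ℕ) (hg : 2 ≤ g) (hn1 : 1 ≤ n) (hn : n ≤ g + 1) :
    (∀ t ∈ Set.Ioo (0:ℝ) 1,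
      (1 - t) * P2R g n t =
        (1+t)^(g+n-2) * (1+t^3)^(g+1-n) *
          (∑ i ∈ Finset.range (n-1), (1+t^2)^(n-2-i) * (2*t)^i) +
        (1+t)^(g+n-1) * (2*t)^(n-1) *
          (∑ i ∈ Finset.range (g+1-n), (1+t^3)^(g-n-i) * (t+t^2)^i)) ∧
    Filter.Tendsto (fun t : ℝ => (1 - t) * P2R g n t)
      (nhdsWithin 1 (Set.Ioo (0:ℝ) 1))
      (nhds (((2*g + 1 - n : ℕ) : ℝ) * 2^(2*g+n-3))) := by
  have hg1 : 1 ≤ g := by omega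
  have hid : ∀ t ∈ Set.Ioo (0:ℝ) 1, (1 - t) * P2R g n t = P2RExpansion g n t :=
    fun t ht => one_sub_mul_P2R hg1 hn1 hn (pow_lt_one₀ ht.1.le ht.2 two_ne_zero).ne
  refine ⟨hid, ?_⟩
  rw [← P2RExpansion_one hg1 hn1 hn]
  exact ((continuous_P2RExpansion g n).tendsto 1).mono_left nhdsWithin_le_nhds
    |>.congr' (Filter.eventuallyEq_of_mem self_mem_nhdsWithin fun t ht => (hid t ht).symm)
end
end

section
/- There is no continuous map φ : [0,1] × [0,1] → ℂ such that |φ(s,t)| = 1 for all (s,t) ∈ [0,1]², φ(s,0) = 1 and φ(s,1) = −1 for all s ∈ [0,1], and φ(1,t) = conj(φ(0,t)) (the complex conjugate) for all t ∈ [0,1]. -/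
/-!
Regard `φ` as a homotopy of paths `t ↦ φ(s,t)` in the circle. Lifting it through the covering
`Circle.exp : ℝ → Circle` gives a continuous `θ` with `θ(s,0) = 0`; the value `a := θ(s,1)` is a
logarithm of `-1` and does not depend on `s`. The right edge `t ↦ θ(1,t)` and `t ↦ -θ(0,t)` both
lift `t ↦ φ(1,t)` and start at `0`, so they coincide, whence `a = -a`, i.e. `a = 0`, which is not
a logarithm of `-1`.
-/

open unitInterval

namespace Circle

theorem exists_lift_of_apply_zero_eq_one {A : Type*} [TopologicalSpace A] (H : C(I × A, Circle))
    (hH : ∀ a, H (0, a) = 1) :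
    ∃ θ : C(I × A, ℝ), exp ∘ θ = H ∧ ∀ a, θ (0, a) = 0 :=
  have hH' : ∀ a, H (0, a) = exp (ContinuousMap.const A 0 a) := fun a => by simp [hH]
  ⟨isCoveringMap_exp.liftHomotopy H _ hH', isCoveringMap_exp.liftHomotopy_lifts ..,
    isCoveringMap_exp.liftHomotopy_zero _ _ hH'⟩

theorem top_edge_eq_one_of_right_edge_eq_inv {ψ : I × I → Circle} (hψ : Continuous ψ) {c : Circle}
    (h0 : ∀ s, ψ (s, 0) = 1) (h1 : ∀ s, ψ (s, 1) = c) (hsym : ∀ t, ψ (1, t) = (ψ (0, t))⁻¹) :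
    c = 1 := by
  -- Homotopy lifting lifts along the first factor, so the path parameter `t` comes first in `θ`.
  obtain ⟨θ, hθ, hθ0⟩ := exists_lift_of_apply_zero_eq_one ⟨fun p => ψ (p.2, p.1), by fun_prop⟩ h0
  have hlift : ∀ t s, exp (θ (t, s)) = ψ (s, t) := fun t s => congr_fun hθ (t, s)
  have htop : θ (1, 1) = θ (1, 0) :=
    isCoveringMap_exp.const_of_comp (g := fun s => θ (1, s)) (by fun_prop)
      (fun s s' => by simp only [hlift, h1]) 1 0
  have hright : (fun t => θ (t, 1)) = fun t => -θ (t, 0) :=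
    isCoveringMap_exp.eq_of_comp_eq (by fun_prop) (by fun_prop)
      (funext fun t => by simp [hlift, hsym]) 0 (by simp [hθ0])
  have hzero : θ (1, 0) = 0 := by linarith [congr_fun hright 1]
  rw [← h1 0, ← hlift, hzero, exp_zero]

end Circle

/-- There is no continuous unit-circle-valued map `φ` on the square with `φ(s,0) = 1`,
`φ(s,1) = -1`, and `φ(1,t)` the complex conjugate of `φ(0,t)`. -/
theorem stmt17 :
    ¬ ∃ φ : unitInterval × unitInterval → ℂ, Continuous φ ∧
      (∀ p, ‖φ p‖ = 1) ∧
      (∀ s, φ (s, 0) = 1) ∧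
      (∀ s, φ (s, 1) = -1) ∧
      (∀ t, φ (1, t) = starRingEnd ℂ (φ (0, t))) := by
  rintro ⟨φ, hcont, hnorm, h0, h1, hconj⟩
  let ψ : I × I → Circle := fun p => ⟨φ p, by simp [Submonoid.unitSphere, hnorm]⟩
  have hminus_one : (⟨-1, by simp [Submonoid.unitSphere]⟩ : Circle) = 1 :=
    Circle.top_edge_eq_one_of_right_edge_eq_inv (ψ := ψ) (hcont.subtype_mk _)
      (fun s => Subtype.ext (h0 s)) (fun s => Subtype.ext (h1 s))
      (fun t => Subtype.ext <| (hconj t).trans (Circle.coe_inv_eq_conj (ψ (0, t))).symm)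
  norm_num [Subtype.ext_iff] at hminus_one
end

section
/- For every integer g ≥ 2: lim_{t→1⁻} (1−t²) · P²_{g}(t) / (1+t)^{2g} = g·2^{2g−2} and lim_{t→1⁻} (1−t) · P²ℝ_{g,g+1}(t) / (1+t)^{g} = g·2^{2g−2}. In particular the two limits are equal: the total mod 2 Betti number of the moduli space of semistable rank-2, degree-1 bundles with fixed determinant on a maximal real curve of genus g equals the total mod 2 Betti number of the corresponding complex fixed-determinant moduli space. -/
open Finset

noncomputable section

/-- `P²_g(t)`, the rational equivariant Poincaré series of semistable rank 2, degree 1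
holomorphic structures on a genus `g` Riemann surface. -/
def P2 (g : ℕ) (t : ℝ) : ℝ :=
  ((1+t)^(2*g) * (1+t^3)^(2*g) - t^(2*g) * (1+t)^(4*g)) / ((1-t^2)^2 * (1-t^4))

/-! After cancelling the factor `(1+t)^…`, each normalized series is `(aⁿ - bⁿ)` divided by a
polynomial vanishing to order two at `t = 1`, where `a` and `b` are polynomials with
`a 1 = b 1 = 2` and `a - b` vanishing to the same order: `(1+t³) - (t+t²) = (1-t)²(1+t)` and
`(1+t²) - 2t = (1-t)²`. So the quotient is, up to a factor continuous at `1`, the geometric sum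
`∑ aⁱ bⁿ⁻¹⁻ⁱ`, whose value at `t = 1` is `n·2ⁿ⁻¹`. -/

open Filter Topology

theorem Filter.Tendsto.geom_sum₂ {α R : Type*} [CommSemiring R] [TopologicalSpace R]
    [IsTopologicalSemiring R] {l : Filter α} {f g : α → R} {c : R}
    (hf : Tendsto f l (𝓝 c)) (hg : Tendsto g l (𝓝 c)) (n : ℕ) :
    Tendsto (fun x => ∑ i ∈ range n, f x ^ i * g x ^ (n - 1 - i)) l
      (𝓝 (n * c ^ (n - 1))) := by
  rw [← geom_sum₂_self]
  exact tendsto_finsetSum _ fun i _ => (hf.pow i).mul (hg.pow _)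

theorem one_sub_sq_mul_P2_div_eq {t : ℝ} (h₁ : t ≠ 1) (h₂ : t ≠ -1) (g : ℕ) :
    (1 - t^2) * P2 g t / (1+t)^(2*g) =
      (∑ i ∈ range (2*g), (1+t^3)^i * (t+t^2)^(2*g-1-i)) / ((1+t) * (1+t^2)) := by
  have hsub : (1:ℝ) - t ≠ 0 := sub_ne_zero.2 h₁.symm
  have hadd : (1:ℝ) + t ≠ 0 := by contrapose! h₂; linarith
  have hS := geom_sum₂_mul (1+t^3) (t+t^2) (2*g)
  generalize (∑ i ∈ range (2*g), (1+t^3)^i * (t+t^2)^(2*g-1-i)) = S at hS ⊢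
  have hb : t^(2*g) * (1+t)^(4*g) = (t+t^2)^(2*g) * (1+t)^(2*g) := by
    rw [show 4 * g = 2 * g + 2 * g by ring, pow_add, ← mul_assoc, ← mul_pow]
    ring_nf
  rw [P2, hb, mul_comm ((t+t^2)^(2*g)), ← mul_sub, ← hS,
    show (1:ℝ) - t^2 = (1 - t) * (1 + t) by ring,
    show (1:ℝ) - t^4 = (1 - t) * (1 + t) * (1 + t^2) by ring]
  field_simp
  ring

theorem P2R_add_one_eq {t : ℝ} (h : 1 - t^2 ≠ 0) (g : ℕ) :
    P2R g (g+1) t = (1+t)^(2*g+2) * ((1+t^2)^g - (2*t)^g) / (1-t^2)^3 := by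
  rw [P2R, Nat.sub_self, Nat.add_sub_cancel, show g + (g + 1) + 1 = 2 * g + 2 by ring,
    show (1:ℝ) - t^4 = (1 - t^2) * (1 + t^2) by ring, mul_pow]
  have : (1:ℝ) + t^2 ≠ 0 := by positivity
  field_simp
  ring

theorem one_sub_mul_P2R_div_eq {t : ℝ} (h₁ : t ≠ 1) (h₂ : t ≠ -1) (g : ℕ) :
    (1 - t) * P2R g (g+1) t / (1+t)^g =
      (1+t)^g * (∑ i ∈ range g, (1+t^2)^i * (2*t)^(g-1-i)) / (1 + t) := by
  have hsub : (1:ℝ) - t ≠ 0 := sub_ne_zero.2 h₁.symm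
  have hadd : (1:ℝ) + t ≠ 0 := by contrapose! h₂; linarith
  have hS := geom_sum₂_mul (1+t^2) (2*t) g
  generalize (∑ i ∈ range g, (1+t^2)^i * (2*t)^(g-1-i)) = S at hS ⊢
  rw [P2R_add_one_eq (by rw [show (1:ℝ) - t^2 = (1 - t) * (1 + t) by ring]; positivity), ← hS,
    show (1:ℝ) - t^2 = (1 - t) * (1 + t) by ring, show 2 * g + 2 = g + g + 2 by ring]
  field_simp
  ring

theorem eventually_ne_one_and_ne_neg_one : ∀ᶠ t in 𝓝[≠] (1:ℝ), t ≠ 1 ∧ t ≠ -1 :=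
  Eventually.and self_mem_nhdsWithin (nhdsWithin_le_nhds (eventually_ne_nhds (by norm_num)))

theorem tendsto_one_sub_sq_mul_P2_div (g : ℕ) :
    Tendsto (fun t : ℝ => (1 - t^2) * P2 g t / (1+t)^(2*g)) (𝓝[≠] 1)
      (𝓝 ((g : ℝ) * 2^(2*g-2))) := by
  have ha := (by fun_prop : Continuous fun t : ℝ => 1 + t^3).tendsto' 1 2 (by norm_num)
  have hb := (by fun_prop : Continuous fun t : ℝ => t + t^2).tendsto' 1 2 (by norm_num)
  have hsum := ha.geom_sum₂ hb (2*g)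
  have hden :=
    (by fun_prop : Continuous fun t : ℝ => (1 + t) * (1 + t^2)).tendsto' 1 4 (by norm_num)
  have value : ((2 * g : ℕ) : ℝ) * 2 ^ (2 * g - 1) / 4 = g * 2 ^ (2 * g - 2) := by
    rcases g with _ | g
    · simp
    · rw [show 2 * (g + 1) - 1 = (2 * (g + 1) - 2) + 1 by omega, pow_succ]
      push_cast
      ring
  rw [← value]
  exact ((hsum.div hden four_ne_zero).mono_left nhdsWithin_le_nhds).congr'
    (eventually_ne_one_and_ne_neg_one.mono fun t ht =>
      (one_sub_sq_mul_P2_div_eq ht.1 ht.2 g).symm)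

theorem tendsto_one_sub_mul_P2R_add_one_div (g : ℕ) :
    Tendsto (fun t : ℝ => (1 - t) * P2R g (g+1) t / (1+t)^g) (𝓝[≠] 1)
      (𝓝 ((g : ℝ) * 2^(2*g-2))) := by
  have ha := (by fun_prop : Continuous fun t : ℝ => 1 + t^2).tendsto' 1 2 (by norm_num)
  have hb := (by fun_prop : Continuous fun t : ℝ => 2 * t).tendsto' 1 2 (by norm_num)
  have hsum := ha.geom_sum₂ hb g
  have hfac :=
    (by fun_prop : Continuous fun t : ℝ => (1 + t) ^ g).tendsto' 1 (2 ^ g) (by norm_num)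
  have hden := (by fun_prop : Continuous fun t : ℝ => 1 + t).tendsto' 1 2 (by norm_num)
  have value : (2 : ℝ) ^ g * (g * 2 ^ (g - 1)) / 2 = g * 2 ^ (2 * g - 2) := by
    rcases g with _ | g
    · simp
    · rw [show 2 * (g + 1) - 2 = g + g by omega, pow_add]
      push_cast
      ring
  rw [← value]
  exact (((hfac.mul hsum).div hden two_ne_zero).mono_left nhdsWithin_le_nhds).congr'
    (eventually_ne_one_and_ne_neg_one.mono fun t ht =>
      (one_sub_mul_P2R_div_eq ht.1 ht.2 g).symm)

theorem stmt18_general (g : ℕ) :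
    Filter.Tendsto (fun t : ℝ => (1 - t^2) * P2 g t / (1+t)^(2*g))
      (nhdsWithin 1 (Set.Ioo (0:ℝ) 1)) (nhds ((g : ℝ) * 2^(2*g-2))) ∧
    Filter.Tendsto (fun t : ℝ => (1 - t) * P2R g (g+1) t / (1+t)^g)
      (nhdsWithin 1 (Set.Ioo (0:ℝ) 1)) (nhds ((g : ℝ) * 2^(2*g-2))) := by
  have left_le_punctured : 𝓝[Set.Ioo (0:ℝ) 1] 1 ≤ 𝓝[≠] 1 :=
    nhdsWithin_mono _ fun t ht => ht.2.ne
  exact ⟨(tendsto_one_sub_sq_mul_P2_div g).mono_left left_le_punctured,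
    (tendsto_one_sub_mul_P2R_add_one_div g).mono_left left_le_punctured⟩

/-- The moduli space of semistable rank 2, degree 1 bundles with fixed determinant on a
maximal real curve of genus `g` is a maximal real algebraic variety: the total mod 2 Betti
numbers of the complex and real fixed-determinant moduli spaces both equal `g·2^{2g-2}`. -/
theorem stmt18 (g : ℕ) (hg : 2 ≤ g) :
    Filter.Tendsto (fun t : ℝ => (1 - t^2) * P2 g t / (1+t)^(2*g))
      (nhdsWithin 1 (Set.Ioo (0:ℝ) 1)) (nhds ((g : ℝ) * 2^(2*g-2))) ∧
    Filter.Tendsto (fun t : ℝ => (1 - t) * P2R g (g+1) t / (1+t)^g)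
      (nhdsWithin 1 (Set.Ioo (0:ℝ) 1)) (nhds ((g : ℝ) * 2^(2*g-2))) :=
  stmt18_general g

end
end
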